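/- Let d ≥ 1 be an integer. There exists a constant C > 0, depending only on d, such that for every k ∈ ℤ^d with |k| ≥ 1, one has ∑_{m ∈ ℤ^d, 1 ≤ |m| ≤ 2|k|} |m|^{1−d} (1+|k−m|)^{3−d} ≤ C |k|^{4−d}. -/

import Mathlib

open scoped BigOperators

/-- Euclidean norm of a lattice point `n ∈ ℤ^d`, viewed in `ℝ^d`. -/
noncomputable def znorm {d : ℕ} (n : Fin d → ℤ) : ℝ :=
  Real.sqrt (∑ i, ((n i : ℝ)) ^ 2)

/-!
Lattice sums are controlled by counting points in a cube: at most `(2R + 1) ^ d` lattice points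
have `|m| ≤ R`, and a dyadic decomposition then gives `∑_{1 ≤ |m| ≤ R} |m| ^ e ≲ R ^ (d + e)` for
`e ≤ 0` and `d + e ≥ 1`. For `d ≤ 3` the factor `(1 + |k - m|) ^ (3 - d)` is simply at most
`(4|k|) ^ (3 - d)`. For `d ≥ 4` both factors decrease, and by the triangle inequality one of `|m|`,
`|k - m|` is at least `|k| / 2`; so one factor is bounded by its value at `|k| / 2` and the other
is summed with the dyadic estimate.
-/

open Finset

section znorm

variable {d : ℕ}

noncomputable def toEuclideanSpace (n : Fin d → ℤ) : EuclideanSpace ℝ (Fin d) :=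
  WithLp.toLp 2 fun i => (n i : ℝ)

lemma znorm_eq_norm_toEuclideanSpace (n : Fin d → ℤ) : znorm n = ‖toEuclideanSpace n‖ := by
  simp [znorm, toEuclideanSpace, EuclideanSpace.norm_eq]

lemma toEuclideanSpace_sub (a b : Fin d → ℤ) :
    toEuclideanSpace (a - b) = toEuclideanSpace a - toEuclideanSpace b := by
  ext i; simp [toEuclideanSpace]

lemma znorm_nonneg (n : Fin d → ℤ) : 0 ≤ znorm n := Real.sqrt_nonneg _

@[simp] lemma znorm_zero : znorm (0 : Fin d → ℤ) = 0 := by simp [znorm]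

lemma znorm_sub_le (a b : Fin d → ℤ) : znorm (a - b) ≤ znorm a + znorm b := by
  simp only [znorm_eq_norm_toEuclideanSpace, toEuclideanSpace_sub]
  exact norm_sub_le _ _

lemma znorm_le_add_znorm_sub (a b : Fin d → ℤ) : znorm a ≤ znorm b + znorm (a - b) := by
  simp only [znorm_eq_norm_toEuclideanSpace, toEuclideanSpace_sub]
  exact norm_le_insert' _ _

lemma abs_le_znorm (n : Fin d → ℤ) (i : Fin d) : |(n i : ℝ)| ≤ znorm n := by
  simpa [znorm_eq_norm_toEuclideanSpace, toEuclideanSpace] using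
    PiLp.norm_apply_le (toEuclideanSpace n) i

lemma one_le_znorm_of_ne_zero {n : Fin d → ℤ} (hn : n ≠ 0) : 1 ≤ znorm n := by
  obtain ⟨i, hi⟩ := Function.ne_iff.mp hn
  calc (1 : ℝ) ≤ |(n i : ℝ)| := by exact_mod_cast Int.one_le_abs hi
    _ ≤ znorm n := abs_le_znorm n i

end znorm

section counting

variable {d : ℕ}

lemma mem_Icc_of_znorm_le {m : Fin d → ℤ} {R : ℝ} (h : znorm m ≤ R) :
    m ∈ Icc (fun _ => -(⌊R⌋₊ : ℤ)) (fun _ => (⌊R⌋₊ : ℤ)) := by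
  have hR : 0 ≤ R := (znorm_nonneg m).trans h
  have hm : ∀ i, |m i| ≤ (⌊R⌋₊ : ℤ) := fun i => by
    rw [Int.natCast_floor_eq_floor hR]
    exact Int.le_floor.mpr (by exact_mod_cast (abs_le_znorm m i).trans h)
  simp only [mem_Icc, Pi.le_def]
  exact ⟨fun i => (abs_le.mp (hm i)).1, fun i => (abs_le.mp (hm i)).2⟩

lemma setOf_znorm_le_finite (R : ℝ) : {m : Fin d → ℤ | znorm m ≤ R}.Finite :=
  (Icc (fun _ => -(⌊R⌋₊ : ℤ)) (fun _ => (⌊R⌋₊ : ℤ))).finite_toSet.subset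
    fun _ => mem_Icc_of_znorm_le

lemma card_le_of_forall_znorm_le {R : ℝ} (hR : 0 ≤ R) {F : Finset (Fin d → ℤ)}
    (hF : ∀ m ∈ F, znorm m ≤ R) : (#F : ℝ) ≤ (2 * R + 1) ^ d := by
  have hcard : #F ≤ (2 * ⌊R⌋₊ + 1) ^ d := by
    calc #F ≤ #(Icc (fun _ => -(⌊R⌋₊ : ℤ)) (fun _ : Fin d => (⌊R⌋₊ : ℤ))) :=
          card_le_card fun m hm => mem_Icc_of_znorm_le (hF m hm)
      _ = (2 * ⌊R⌋₊ + 1) ^ d := by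
          simp only [Pi.card_Icc, Int.card_Icc, prod_const, card_univ, Fintype.card_fin]
          congr 1
          omega
  calc (#F : ℝ) ≤ (2 * ⌊R⌋₊ + 1 : ℕ) ^ d := by exact_mod_cast hcard
    _ ≤ (2 * R + 1) ^ d := by
      push_cast
      gcongr
      exact Nat.floor_le hR

end counting

lemma half_rpow_le {d : ℕ} {K e : ℝ} (hK : 0 ≤ K) (he : -e ≤ d) :
    (K / 2) ^ e ≤ 2 ^ d * K ^ e := by
  rw [Real.div_rpow hK zero_le_two, div_eq_mul_inv, ← Real.rpow_neg zero_le_two, mul_comm,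
    ← Real.rpow_natCast]
  gcongr
  exact one_le_two

section dyadic

variable {d : ℕ} {e : ℝ}

lemma sum_znorm_rpow_le_of_half_lt (he : e ≤ 0) (hde : 0 ≤ d + e) {R : ℝ} (hR : 1 ≤ R)
    {F : Finset (Fin d → ℤ)} (hF : ∀ m ∈ F, R / 2 < znorm m ∧ znorm m ≤ R) :
    ∑ m ∈ F, znorm m ^ e ≤ 6 ^ d * R ^ (d + e) := by
  have hR0 : 0 < R := by linarith
  have hterm : ∀ m ∈ F, znorm m ^ e ≤ 2 ^ d * R ^ e := fun m hm =>
    (Real.rpow_le_rpow_of_nonpos (by positivity) (hF m hm).1.le he).trans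
      (half_rpow_le hR0.le (by linarith))
  calc ∑ m ∈ F, znorm m ^ e ≤ #F * (2 ^ d * R ^ e) := by
        simpa using sum_le_card_nsmul F _ _ hterm
    _ ≤ (3 * R) ^ d * (2 ^ d * R ^ e) := by
        gcongr
        exact (card_le_of_forall_znorm_le hR0.le fun m hm => (hF m hm).2).trans
          (by gcongr; linarith)
    _ = 6 ^ d * R ^ (d + e) := by
        rw [Real.rpow_add hR0, Real.rpow_natCast, mul_pow,
          show (6 : ℝ) ^ d = 2 ^ d * 3 ^ d by rw [← mul_pow]; norm_num]
        ring

lemma sum_znorm_rpow_le (he : e ≤ 0) (hde : 1 ≤ d + e) {R : ℝ} (hR : 1 ≤ R)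
    {F : Finset (Fin d → ℤ)} (hF : ∀ m ∈ F, 1 ≤ znorm m ∧ znorm m ≤ R) :
    ∑ m ∈ F, znorm m ^ e ≤ 2 * 6 ^ d * R ^ (d + e) := by
  -- Induction on `N` with `R < 2 ^ N`: halving `R` gains the factor `2 ^ (-(d + e)) ≤ 1 / 2`,
  -- which absorbs the contribution of the shell `R / 2 < |m| ≤ R`.
  obtain ⟨N, hN⟩ := pow_unbounded_of_one_lt R one_lt_two
  induction N generalizing R F with
  | zero => rw [pow_zero] at hN; linarith
  | succ N ih =>
    have hR0 : 0 < R := by linarith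
    rw [← sum_filter_add_sum_filter_not F fun m => znorm m ≤ R / 2]
    have hsmall : ∑ m ∈ F with znorm m ≤ R / 2, znorm m ^ e ≤ 6 ^ d * R ^ (d + e) := by
      by_cases hR2 : 1 ≤ R / 2
      · refine (ih hR2 (fun m hm => ?_) (by rw [pow_succ] at hN; linarith)).trans ?_
        · obtain ⟨hmF, hm⟩ := mem_filter.mp hm
          exact ⟨(hF m hmF).1, hm⟩
        · have h2 : (2 : ℝ) ≤ 2 ^ (d + e) := by
            simpa using Real.rpow_le_rpow_of_exponent_le one_le_two hde
          calc 2 * 6 ^ d * (R / 2) ^ (d + e) = 2 * 6 ^ d * (R ^ (d + e) / 2 ^ (d + e)) := by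
                rw [Real.div_rpow hR0.le zero_le_two]
            _ ≤ 2 * 6 ^ d * (R ^ (d + e) / 2) := by gcongr
            _ = 6 ^ d * R ^ (d + e) := by ring
      · rw [sum_eq_zero fun m hm => ?_]
        · positivity
        · obtain ⟨hmF, hm⟩ := mem_filter.mp hm
          linarith [(hF m hmF).1]
    have hlarge := sum_znorm_rpow_le_of_half_lt he (by linarith) hR
      (F := F.filter fun m => ¬znorm m ≤ R / 2) fun m hm => by
        obtain ⟨hmF, hm⟩ := mem_filter.mp hm
        exact ⟨not_le.mp hm, (hF m hmF).2⟩
    linarith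

end dyadic

section convolution

variable {d : ℕ}

lemma sum_one_add_znorm_rpow_le {β : ℝ} (hβ : β ≤ 0) (hdβ : 1 ≤ d + β) {R : ℝ} (hR : 1 ≤ R)
    {G : Finset (Fin d → ℤ)} (hG : ∀ n ∈ G, znorm n ≤ R) :
    ∑ n ∈ G, (1 + znorm n) ^ β ≤ 1 + 2 * 6 ^ d * R ^ (d + β) := by
  have hnonzero : ∑ n ∈ G.erase 0, (1 + znorm n) ^ β ≤ 2 * 6 ^ d * R ^ (d + β) := by
    have hG' : ∀ n ∈ G.erase 0, 1 ≤ znorm n ∧ znorm n ≤ R := fun n hn =>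
      ⟨one_le_znorm_of_ne_zero (ne_of_mem_erase hn), hG n (mem_of_mem_erase hn)⟩
    refine (sum_le_sum fun n hn => ?_).trans (sum_znorm_rpow_le hβ hdβ hR hG')
    exact Real.rpow_le_rpow_of_nonpos (by linarith [hG' n hn]) (by linarith) hβ
  calc ∑ n ∈ G, (1 + znorm n) ^ β ≤ ∑ n ∈ insert 0 (G.erase 0), (1 + znorm n) ^ β :=
        sum_le_sum_of_subset_of_nonneg (insert_erase_subset 0 G)
          fun n _ _ => Real.rpow_nonneg (by linarith [znorm_nonneg n]) β
    _ = 1 + ∑ n ∈ G.erase 0, (1 + znorm n) ^ β := by simp [sum_insert (notMem_erase 0 G)]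
    _ ≤ 1 + 2 * 6 ^ d * R ^ (d + β) := by linarith

lemma rpow_mul_rpow_le_of_le_add {a b K α β : ℝ} (hα : α ≤ 0) (hβ : β ≤ 0) (ha : 0 ≤ a)
    (hb : 0 ≤ b) (hK : 0 < K) (h : K ≤ a + b) :
    a ^ α * (1 + b) ^ β ≤ (K / 2) ^ α * (1 + b) ^ β + (K / 2) ^ β * a ^ α := by
  have hA := Real.rpow_nonneg ha α
  have hB : 0 ≤ (1 + b) ^ β := Real.rpow_nonneg (by linarith) β
  rcases le_or_gt (K / 2) a with ha2 | ha2
  · have := mul_le_mul_of_nonneg_right (Real.rpow_le_rpow_of_nonpos (by positivity) ha2 hα) hB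
    have : 0 ≤ (K / 2) ^ β * a ^ α := by positivity
    linarith
  · have := mul_le_mul_of_nonneg_left
      (Real.rpow_le_rpow_of_nonpos (by positivity) (by linarith : K / 2 ≤ 1 + b) hβ) hA
    have : 0 ≤ (K / 2) ^ α * (1 + b) ^ β := by positivity
    linarith

variable {k : Fin d → ℤ} {F : Finset (Fin d → ℤ)}

lemma sum_znorm_rpow_one_sub_le (hd : 0 < d) (hk : 1 ≤ znorm k)
    (hF : ∀ m ∈ F, 1 ≤ znorm m ∧ znorm m ≤ 2 * znorm k) :
    ∑ m ∈ F, znorm m ^ ((1 : ℝ) - d) ≤ 4 * 6 ^ d * znorm k := by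
  have hd' : (1 : ℝ) ≤ d := by exact_mod_cast hd
  have := sum_znorm_rpow_le (e := 1 - d) (by linarith) (by linarith) (by linarith) hF
  rw [add_sub_cancel, Real.rpow_one] at this
  linarith

lemma sum_one_add_znorm_sub_rpow_le (hd4 : 4 ≤ d) (hk : 1 ≤ znorm k)
    (hF : ∀ m ∈ F, znorm m ≤ 2 * znorm k) :
    ∑ m ∈ F, (1 + znorm (k - m)) ^ ((3 : ℝ) - d) ≤ 1 + 54 * 6 ^ d * znorm k ^ 3 := by
  have hd4' : (4 : ℝ) ≤ d := by exact_mod_cast hd4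
  have := sum_one_add_znorm_rpow_le (β := 3 - d) (by linarith) (by linarith)
    (by linarith : 1 ≤ 3 * znorm k) (G := F.image (k - ·)) fun n hn => by
      obtain ⟨m, hm, rfl⟩ := mem_image.mp hn
      linarith [znorm_sub_le k m, hF m hm]
  rw [sum_image fun m _ m' _ h => sub_right_injective h, add_sub_cancel,
    Real.mul_rpow zero_le_three (znorm_nonneg k)] at this
  norm_num at this
  linarith

lemma sum_convolution_le_of_le_three (hd : 0 < d) (hd3 : d ≤ 3) (hk : 1 ≤ znorm k)
    (hF : ∀ m ∈ F, 1 ≤ znorm m ∧ znorm m ≤ 2 * znorm k) :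
    ∑ m ∈ F, znorm m ^ ((1 : ℝ) - d) * (1 + znorm (k - m)) ^ ((3 : ℝ) - d)
      ≤ 256 * 6 ^ d * znorm k ^ ((4 : ℝ) - d) := by
  set K := znorm k
  have hK0 : 0 < K := by linarith
  have hd3' : (d : ℝ) ≤ 3 := by exact_mod_cast hd3
  have hfar : ∀ m ∈ F, (1 + znorm (k - m)) ^ ((3 : ℝ) - d) ≤ 64 * K ^ ((3 : ℝ) - d) := by
    intro m hm
    have h4K : 1 + znorm (k - m) ≤ 4 * K := by linarith [znorm_sub_le k m, (hF m hm).2]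
    calc (1 + znorm (k - m)) ^ ((3 : ℝ) - d) ≤ (4 * K) ^ ((3 : ℝ) - d) := by
          gcongr
          linarith [znorm_nonneg (k - m)]
      _ = 4 ^ ((3 : ℝ) - d) * K ^ ((3 : ℝ) - d) := Real.mul_rpow (by norm_num) hK0.le
      _ ≤ 4 ^ (3 : ℝ) * K ^ ((3 : ℝ) - d) := by
          gcongr
          · norm_num
          · linarith
      _ = 64 * K ^ ((3 : ℝ) - d) := by norm_num
  calc ∑ m ∈ F, znorm m ^ ((1 : ℝ) - d) * (1 + znorm (k - m)) ^ ((3 : ℝ) - d)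
      ≤ ∑ m ∈ F, znorm m ^ ((1 : ℝ) - d) * (64 * K ^ ((3 : ℝ) - d)) :=
        sum_le_sum fun m hm =>
          mul_le_mul_of_nonneg_left (hfar m hm) (Real.rpow_nonneg (znorm_nonneg m) _)
    _ = (∑ m ∈ F, znorm m ^ ((1 : ℝ) - d)) * (64 * K ^ ((3 : ℝ) - d)) := by rw [sum_mul]
    _ ≤ 4 * 6 ^ d * K * (64 * K ^ ((3 : ℝ) - d)) := by
        gcongr
        exact sum_znorm_rpow_one_sub_le hd hk hF
    _ = 256 * 6 ^ d * K ^ ((4 : ℝ) - d) := by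
        rw [show (4 : ℝ) - d = 3 - d + 1 by ring, Real.rpow_add_one hK0.ne']
        ring

lemma sum_convolution_le_of_four_le (hd4 : 4 ≤ d) (hk : 1 ≤ znorm k)
    (hF : ∀ m ∈ F, 1 ≤ znorm m ∧ znorm m ≤ 2 * znorm k) :
    ∑ m ∈ F, znorm m ^ ((1 : ℝ) - d) * (1 + znorm (k - m)) ^ ((3 : ℝ) - d)
      ≤ 59 * 12 ^ d * znorm k ^ ((4 : ℝ) - d) := by
  set K := znorm k
  have hK0 : 0 < K := by linarith
  have hd4' : (4 : ℝ) ≤ d := by exact_mod_cast hd4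
  have hsplit : ∀ m ∈ F, znorm m ^ ((1 : ℝ) - d) * (1 + znorm (k - m)) ^ ((3 : ℝ) - d)
      ≤ 2 ^ d * K ^ ((1 : ℝ) - d) * (1 + znorm (k - m)) ^ ((3 : ℝ) - d)
        + 2 ^ d * K ^ ((3 : ℝ) - d) * znorm m ^ ((1 : ℝ) - d) := by
    intro m _
    refine (rpow_mul_rpow_le_of_le_add (by linarith) (by linarith) (znorm_nonneg m)
      (znorm_nonneg _) hK0 (znorm_le_add_znorm_sub k m)).trans (add_le_add ?_ ?_)
    · exact mul_le_mul_of_nonneg_right (half_rpow_le hK0.le (by linarith))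
        (Real.rpow_nonneg (by linarith [znorm_nonneg (k - m)]) _)
    · exact mul_le_mul_of_nonneg_right (half_rpow_le hK0.le (by linarith))
        (Real.rpow_nonneg (znorm_nonneg m) _)
  have hK1 : K ^ ((1 : ℝ) - d) ≤ K ^ ((4 : ℝ) - d) :=
    Real.rpow_le_rpow_of_exponent_le hk (by linarith)
  have hK13 : K ^ ((1 : ℝ) - d) * K ^ 3 = K ^ ((4 : ℝ) - d) := by
    rw [← Real.rpow_add_natCast hK0.ne']; ring_nf
  have hK31 : K ^ ((3 : ℝ) - d) * K = K ^ ((4 : ℝ) - d) := by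
    rw [← Real.rpow_add_one hK0.ne']; ring_nf
  have h12 : (12 : ℝ) ^ d = 2 ^ d * 6 ^ d := by rw [← mul_pow]; norm_num
  have h2 : (2 : ℝ) ^ d ≤ 12 ^ d := pow_le_pow_left₀ zero_le_two (by norm_num) d
  calc ∑ m ∈ F, znorm m ^ ((1 : ℝ) - d) * (1 + znorm (k - m)) ^ ((3 : ℝ) - d)
      ≤ 2 ^ d * K ^ ((1 : ℝ) - d) * ∑ m ∈ F, (1 + znorm (k - m)) ^ ((3 : ℝ) - d)
        + 2 ^ d * K ^ ((3 : ℝ) - d) * ∑ m ∈ F, znorm m ^ ((1 : ℝ) - d) := by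
        rw [mul_sum, mul_sum, ← sum_add_distrib]
        exact sum_le_sum hsplit
    _ ≤ 2 ^ d * K ^ ((1 : ℝ) - d) * (1 + 54 * 6 ^ d * K ^ 3)
        + 2 ^ d * K ^ ((3 : ℝ) - d) * (4 * 6 ^ d * K) := by
        gcongr
        · exact sum_one_add_znorm_sub_rpow_le hd4 hk fun m hm => (hF m hm).2
        · exact sum_znorm_rpow_one_sub_le (by omega) hk hF
    _ = 2 ^ d * K ^ ((1 : ℝ) - d) + 54 * 12 ^ d * (K ^ ((1 : ℝ) - d) * K ^ 3)
        + 4 * 12 ^ d * (K ^ ((3 : ℝ) - d) * K) := by rw [h12]; ring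
    _ = 2 ^ d * K ^ ((1 : ℝ) - d) + 58 * 12 ^ d * K ^ ((4 : ℝ) - d) := by
        rw [hK13, hK31]; ring
    _ ≤ 59 * 12 ^ d * K ^ ((4 : ℝ) - d) := by
        nlinarith [mul_le_mul h2 hK1 (Real.rpow_nonneg hK0.le _) (by positivity)]

lemma sum_convolution_le (hd : 0 < d) (hk : 1 ≤ znorm k)
    (hF : ∀ m ∈ F, 1 ≤ znorm m ∧ znorm m ≤ 2 * znorm k) :
    ∑ m ∈ F, znorm m ^ ((1 : ℝ) - d) * (1 + znorm (k - m)) ^ ((3 : ℝ) - d)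
      ≤ 256 * 12 ^ d * znorm k ^ ((4 : ℝ) - d) := by
  have hX : 0 ≤ znorm k ^ ((4 : ℝ) - d) := Real.rpow_nonneg (znorm_nonneg k) _
  rcases le_or_gt d 3 with hd3 | hd4
  · refine (sum_convolution_le_of_le_three hd hd3 hk hF).trans ?_
    gcongr
    all_goals norm_num
  · refine (sum_convolution_le_of_four_le hd4 hk hF).trans ?_
    gcongr; norm_num

end convolution

theorem stmt10 (d : ℕ) (hd : 0 < d) :
    ∃ C : ℝ, 0 < C ∧ ∀ k : Fin d → ℤ, 1 ≤ znorm k →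
      ∑' m : {m : Fin d → ℤ // 1 ≤ znorm m ∧ znorm m ≤ 2 * znorm k},
          znorm m.1 ^ ((1 : ℝ) - d) * (1 + znorm (k - m.1)) ^ ((3 : ℝ) - d)
        ≤ C * znorm k ^ ((4 : ℝ) - d) := by
  refine ⟨256 * 12 ^ d, by positivity, fun k hk => ?_⟩
  have hfin : {m : Fin d → ℤ | 1 ≤ znorm m ∧ znorm m ≤ 2 * znorm k}.Finite :=
    (setOf_znorm_le_finite _).subset fun _ hm => hm.2
  have : Fintype {m : Fin d → ℤ // 1 ≤ znorm m ∧ znorm m ≤ 2 * znorm k} := hfin.fintype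
  rw [tsum_fintype]
  calc _ = ∑ m ∈ hfin.toFinset, znorm m ^ ((1 : ℝ) - d) * (1 + znorm (k - m)) ^ ((3 : ℝ) - d) :=
        (sum_subtype _ (fun _ => hfin.mem_toFinset) _).symm
    _ ≤ _ := sum_convolution_le hd hk fun m hm => hfin.mem_toFinset.mp hm
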